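/- Let p ≥ 2 and let G be the subgroup of SL(p,ℤ) generated by R_{1i}², Q_{1i} (1 < i ≤ p) and R_{1p}R_{ip} (1 < i < p). Then G contains R_{ij}² and Q_{ij} for all pairs of distinct indices i ≠ j in {1, …, p}, and G contains R_{ik}R_{jk} for all mutually distinct triples of indices i, j, k in {1, …, p}. -/

import Mathlib

open Matrix

/-- `Rm p i j h` is the matrix `R_{ij} = I + E_{ij}` (where `E_{ij}` has a single nonzero
entry `1` at position `(i,j)`), as an element of `SL(p, ℤ)`. -/
def Rm (p : ℕ) (i j : Fin p) (h : i ≠ j) : Matrix.SpecialLinearGroup (Fin p) ℤ :=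
  ⟨1 + Matrix.single i j 1, by
    simpa [Matrix.transvection] using Matrix.det_transvection_of_ne i j h (1 : ℤ)⟩

/-- `Qm p i j h` is the matrix `Q_{ij} = R_{ij}⁻¹ R_{ji} R_{ij}⁻¹` in `SL(p, ℤ)`. -/
def Qm (p : ℕ) (i j : Fin p) (h : i ≠ j) : Matrix.SpecialLinearGroup (Fin p) ℤ :=
  (Rm p i j h)⁻¹ * Rm p j i h.symm * (Rm p i j h)⁻¹

/-- The first index `1` (of the paper's indexing `1, …, p`) in `Fin p`. -/
def firstIdx (p : ℕ) (hp : 2 ≤ p) : Fin p := ⟨0, by omega⟩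

/-- The last index `p` (of the paper's indexing `1, …, p`) in `Fin p`. -/
def lastIdx (p : ℕ) (hp : 2 ≤ p) : Fin p := ⟨p - 1, by omega⟩

theorem firstIdx_ne_lastIdx (p : ℕ) (hp : 2 ≤ p) : firstIdx p hp ≠ lastIdx p hp := by
  simp only [firstIdx, lastIdx, Fin.ne_iff_vne]
  omega

/-- The generating set consisting of `R_{1i}²`, `Q_{1i}` for `1 < i ≤ p`, together with
`R_{1p} R_{ip}` for `1 < i < p`. -/
def GGens (p : ℕ) (hp : 2 ≤ p) : Set (Matrix.SpecialLinearGroup (Fin p) ℤ) :=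
  {A | ∃ (i : Fin p) (h : firstIdx p hp ≠ i),
      A = Rm p (firstIdx p hp) i h ^ 2 ∨ A = Qm p (firstIdx p hp) i h} ∪
  {A | ∃ (i : Fin p) (h1 : firstIdx p hp ≠ i) (h2 : i ≠ lastIdx p hp),
      A = Rm p (firstIdx p hp) (lastIdx p hp) (firstIdx_ne_lastIdx p hp) *
          Rm p i (lastIdx p hp) h2}

/-- The subgroup `G ≤ SL(p,ℤ)` generated by `R_{1i}²`, `Q_{1i}` (`1 < i ≤ p`) and
`R_{1p} R_{ip}` (`1 < i < p`). -/
def G (p : ℕ) (hp : 2 ≤ p) : Subgroup (Matrix.SpecialLinearGroup (Fin p) ℤ) :=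
  Subgroup.closure (GGens p hp)

/-!
`Q_{ab}` is the signed permutation matrix `e_a ↦ e_b ↦ -e_a`, so conjugation by `Q_{ab}` moves
the transvection `I + c E_{kl}` to `I ± c E_{σk,σl}`, where `σ` is the transposition `(a b)`.
Since `(I + c E_{kl})⁻¹ = I - c E_{kl}`, membership in a subgroup is blind to the sign. As `G`
contains every `Q_{1i}`, it contains `Q_{ij} = Q_{1i} Q_{1j} Q_{1i}⁻¹`, and conjugating the
generators `R_{1i}²` and `R_{1p} R_{ip}` by suitable `Q`'s moves their indices anywhere.
-/

theorem Subgroup.conj_mem_of_mem {M : Type*} [Group M] {H : Subgroup M} {g x : M} (hg : g ∈ H)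
    (hx : x ∈ H) : MulAut.conj g x ∈ H :=
  mul_mem (mul_mem hg hx) (inv_mem hg)

namespace Matrix.SpecialLinearGroup

variable {n R : Type*} [Fintype n] [DecidableEq n] [CommRing R]

def signedSwap {a b : n} (hab : a ≠ b) : SpecialLinearGroup n R :=
  (transvection hab 1)⁻¹ * transvection hab.symm 1 * (transvection hab 1)⁻¹

def swapSign (b x : n) : R := if x = b then -1 else 1

omit [Fintype n] in
theorem swapSign_of_ne {b x : n} (h : x ≠ b) : swapSign b x = (1 : R) := if_neg h

omit [Fintype n] in
theorem swapSign_mul_self (b x : n) : swapSign b x * swapSign b x = (1 : R) := by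
  unfold swapSign; split_ifs <;> simp

theorem coe_signedSwap {a b : n} (hab : a ≠ b) :
    ((signedSwap hab : SpecialLinearGroup n R) : Matrix n n R) =
      1 - single a a 1 - single b b 1 + single b a 1 - single a b 1 := by
  simp only [signedSwap, transvection_inv, coe_mul, transvection_coe, mul_add, add_mul, one_mul,
    mul_one, single_mul_single_same, single_mul_single_of_ne _ _ _ _ hab.symm, add_zero]
  simp only [mul_neg, mul_one, neg_neg, ← single_neg]
  abel

theorem signedSwap_apply {a b : n} (hab : a ≠ b) (x y : n) :
    ((signedSwap hab : SpecialLinearGroup n R) : Matrix n n R) x y =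
      if x = Equiv.swap a b y then swapSign b y else 0 := by
  rw [coe_signedSwap]
  simp only [sub_apply, add_apply, one_apply, single_apply, Equiv.swap_apply_def, swapSign]
  split_ifs <;> grind

theorem signedSwap_mul_single {a b : n} (hab : a ≠ b) (k l : n) (c : R) :
    ((signedSwap hab : SpecialLinearGroup n R) : Matrix n n R) * single k l c =
      single (Equiv.swap a b k) l (swapSign b k * c) := by
  ext x y
  rcases eq_or_ne y l with rfl | hy
  · rw [mul_single_apply_same, signedSwap_apply, single_apply]
    split_ifs <;> simp_all [mul_comm]
  · simp [hy, hy.symm]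

theorem single_mul_signedSwap {a b : n} (hab : a ≠ b) (k l : n) (c : R) :
    single k (Equiv.swap a b l) c * ((signedSwap hab : SpecialLinearGroup n R) : Matrix n n R) =
      single k l (swapSign b l * c) := by
  ext x y
  rcases eq_or_ne x k with rfl | hx
  · rw [single_mul_apply_same, signedSwap_apply, single_apply]
    split_ifs <;> simp_all [mul_comm]
  · simp [hx, hx.symm]

theorem conj_signedSwap_transvection {a b k l : n} (hab : a ≠ b) (hkl : k ≠ l) (c : R) :
    MulAut.conj (signedSwap hab) (transvection hkl c) =
      transvection ((Equiv.swap a b).injective.ne hkl) (swapSign b k * swapSign b l * c) := by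
  rw [MulAut.conj_apply, mul_inv_eq_iff_eq_mul]
  refine Subtype.ext ?_
  simp only [coe_mul, transvection_coe, mul_add, add_mul, mul_one, one_mul, signedSwap_mul_single,
    single_mul_signedSwap]
  congr 2
  linear_combination (-(swapSign b k * c)) * swapSign_mul_self (R := R) b l

theorem conj_signedSwap_signedSwap {a b k l : n} (hab : a ≠ b) (hkl : k ≠ l) (hkb : k ≠ b)
    (hlb : l ≠ b) :
    MulAut.conj (signedSwap hab) (signedSwap hkl : SpecialLinearGroup n R) =
      signedSwap ((Equiv.swap a b).injective.ne hkl) := by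
  change MulAut.conj _
    ((transvection hkl 1)⁻¹ * transvection hkl.symm 1 * (transvection hkl 1)⁻¹) = _
  simp only [map_mul, map_inv, conj_signedSwap_transvection, swapSign_of_ne hkb,
    swapSign_of_ne hlb, one_mul]
  rfl

theorem signedSwap_mul_signedSwap {a b : n} (hab : a ≠ b) :
    (signedSwap hab : SpecialLinearGroup n R) * signedSwap hab.symm = 1 := by
  refine Subtype.ext ?_
  simp only [coe_mul, coe_signedSwap, coe_one, mul_add, add_mul, mul_sub, sub_mul, mul_one,
    one_mul, single_mul_single_same, single_mul_single_of_ne _ _ _ _ hab,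
    single_mul_single_of_ne _ _ _ _ hab.symm]
  abel

theorem signedSwap_inv {a b : n} (hab : a ≠ b) :
    (signedSwap hab : SpecialLinearGroup n R)⁻¹ = signedSwap hab.symm :=
  inv_eq_of_mul_eq_one_right (signedSwap_mul_signedSwap hab)

theorem transvection_commute {i j k : n} (hik : i ≠ k) (hjk : j ≠ k) (c d : R) :
    Commute (transvection hik c) (transvection hjk d) := by
  refine Subtype.ext ?_
  simp only [coe_mul, transvection_coe, mul_add, add_mul, mul_one, one_mul,
    single_mul_single_of_ne _ _ _ _ hik.symm, single_mul_single_of_ne _ _ _ _ hjk.symm]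
  abel

section Subgroup

variable {H : Subgroup (SpecialLinearGroup n R)}

theorem transvection_swapSign_mul_mem_iff {i j : n} (hij : i ≠ j) (b x : n) (c : R) :
    transvection hij (swapSign b x * c) ∈ H ↔ transvection hij c ∈ H := by
  unfold swapSign
  split_ifs
  · rw [neg_one_mul, ← transvection_inv, inv_mem_iff]
  · rw [one_mul]

theorem transvection_mem_of_signedSwap_mem {a b k l k' l' : n} {hab : a ≠ b} {hkl : k ≠ l}
    {hkl' : k' ≠ l'} {c : R} (hQ : signedSwap hab ∈ H) (hT : transvection hkl c ∈ H)
    (hk : Equiv.swap a b k = k') (hl : Equiv.swap a b l = l') :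
    transvection hkl' c ∈ H := by
  have h := Subgroup.conj_mem_of_mem hQ hT
  subst hk hl
  rwa [conj_signedSwap_transvection, mul_assoc, transvection_swapSign_mul_mem_iff,
    transvection_swapSign_mul_mem_iff] at h

theorem transvection_mul_transvection_mem_of_signedSwap_mem {a b i j k i' j' k' : n}
    {hab : a ≠ b} {hik : i ≠ k} {hjk : j ≠ k} {hik' : i' ≠ k'} {hjk' : j' ≠ k'} {c : R}
    (hQ : signedSwap hab ∈ H) (hP : transvection hik c * transvection hjk c ∈ H)
    (hib : i ≠ b) (hjb : j ≠ b) (hi : Equiv.swap a b i = i') (hj : Equiv.swap a b j = j')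
    (hk : Equiv.swap a b k = k') :
    transvection hik' c * transvection hjk' c ∈ H := by
  have h := Subgroup.conj_mem_of_mem hQ hP
  subst hi hj hk
  rw [map_mul, conj_signedSwap_transvection, conj_signedSwap_transvection, swapSign_of_ne hib,
    swapSign_of_ne hjb, one_mul] at h
  -- both factors carry the same sign, which inversion undoes since they commute
  unfold swapSign at h
  split_ifs at h
  · rwa [neg_one_mul, ← transvection_inv, ← transvection_inv, ← _root_.mul_inv_rev,
      (transvection_commute _ _ _ _).eq, inv_mem_iff] at h
  · rwa [one_mul] at h

variable {o : n}

theorem signedSwap_mem_of_signedSwap_mem {a b k l k' l' : n} {hab : a ≠ b} {hkl : k ≠ l}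
    {hkl' : k' ≠ l'} (hQ : signedSwap hab ∈ H) (hQ' : signedSwap hkl ∈ H) (hkb : k ≠ b)
    (hlb : l ≠ b) (hk : Equiv.swap a b k = k') (hl : Equiv.swap a b l = l') :
    (signedSwap hkl' : SpecialLinearGroup n R) ∈ H := by
  have h := Subgroup.conj_mem_of_mem hQ hQ'
  subst hk hl
  rwa [conj_signedSwap_signedSwap hab hkl hkb hlb] at h

theorem signedSwap_mem_of_forall (hQ : ∀ i (h : o ≠ i), signedSwap h ∈ H) {i j : n}
    (hij : i ≠ j) : (signedSwap hij : SpecialLinearGroup n R) ∈ H := by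
  rcases eq_or_ne o i with rfl | hoi
  · exact hQ j hij
  rcases eq_or_ne o j with rfl | hoj
  · rw [← signedSwap_inv hoi]; exact inv_mem (hQ i hoi)
  exact signedSwap_mem_of_signedSwap_mem (hQ i hoi) (hQ j hoj) hoi hij.symm
    (Equiv.swap_apply_left o i) (Equiv.swap_apply_of_ne_of_ne hoj.symm hij.symm)

theorem transvection_mem_of_forall {c : R} (hQ : ∀ {i j : n} (h : i ≠ j), signedSwap h ∈ H)
    (hT : ∀ j (h : o ≠ j), transvection h c ∈ H) {i j : n} (hij : i ≠ j) :
    transvection hij c ∈ H := by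
  rcases eq_or_ne o i with rfl | hoi
  · exact hT j hij
  rcases eq_or_ne o j with rfl | hoj
  · exact transvection_mem_of_signedSwap_mem (hQ hoi) (hT i hoi)
      (Equiv.swap_apply_left o i) (Equiv.swap_apply_right o i)
  exact transvection_mem_of_signedSwap_mem (hQ hoi) (hT j hoj)
    (Equiv.swap_apply_left o i) (Equiv.swap_apply_of_ne_of_ne hoj.symm hij.symm)

theorem transvection_mul_transvection_mem_of_forall_row {q : n} {c : R} (hoq : o ≠ q)
    (hQ : ∀ {i j : n} (h : i ≠ j), signedSwap h ∈ H)
    (hP : ∀ j (_ : o ≠ j) (hjq : j ≠ q), transvection hoq c * transvection hjq c ∈ H)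
    {i j : n} (hiq : i ≠ q) (hjq : j ≠ q) (hij : i ≠ j) :
    transvection hiq c * transvection hjq c ∈ H := by
  rcases eq_or_ne o i with rfl | hoi
  · exact hP j hij hjq
  rcases eq_or_ne o j with rfl | hoj
  · rw [(transvection_commute hiq hjq c c).eq]; exact hP i hoi hiq
  exact transvection_mul_transvection_mem_of_signedSwap_mem (hQ hoi) (hP j hoj hjq) hoi hij.symm
    (Equiv.swap_apply_left o i) (Equiv.swap_apply_of_ne_of_ne hoj.symm hij.symm)
    (Equiv.swap_apply_of_ne_of_ne hoq.symm hiq.symm)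

theorem transvection_mul_transvection_mem_of_forall_col {q : n} {c : R}
    (hQ : ∀ {i j : n} (h : i ≠ j), signedSwap h ∈ H)
    (hP : ∀ {i j : n} (hiq : i ≠ q) (hjq : j ≠ q), i ≠ j →
      transvection hiq c * transvection hjq c ∈ H)
    {i j k : n} (hik : i ≠ k) (hjk : j ≠ k) (hij : i ≠ j) :
    transvection hik c * transvection hjk c ∈ H := by
  rcases eq_or_ne k q with rfl | hkq
  · exact hP hik hjk hij
  have hq : ∀ {l : n} (hlk : l ≠ k) (hlq : l ≠ q) (hqk : q ≠ k),
      transvection hqk c * transvection hlk c ∈ H := fun hlk hlq _ =>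
    transvection_mul_transvection_mem_of_signedSwap_mem (hQ hkq) (hP hkq hlq hlk.symm) hkq hlq
      (Equiv.swap_apply_left k q) (Equiv.swap_apply_of_ne_of_ne hlk hlq)
      (Equiv.swap_apply_right k q)
  rcases eq_or_ne i q with rfl | hiq
  · exact hq hjk hij.symm hik
  rcases eq_or_ne j q with rfl | hjq
  · rw [(transvection_commute hik hjk c c).eq]; exact hq hik hij hjk
  exact transvection_mul_transvection_mem_of_signedSwap_mem (hQ (Ne.symm hkq)) (hP hiq hjq hij)
    hik hjk (Equiv.swap_apply_of_ne_of_ne hiq hik) (Equiv.swap_apply_of_ne_of_ne hjq hjk)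
    (Equiv.swap_apply_left q k)

end Subgroup

end Matrix.SpecialLinearGroup

open Matrix.SpecialLinearGroup

theorem Rm_eq_transvection {p : ℕ} {i j : Fin p} (h : i ≠ j) :
    Rm p i j h = SpecialLinearGroup.transvection h 1 :=
  rfl

theorem Qm_eq_signedSwap {p : ℕ} {i j : Fin p} (h : i ≠ j) : Qm p i j h = signedSwap h :=
  rfl

theorem Rm_sq {p : ℕ} {i j : Fin p} (h : i ≠ j) :
    Rm p i j h ^ 2 = SpecialLinearGroup.transvection h 2 := by
  rw [Rm_eq_transvection, sq, ← transvection_add, one_add_one_eq_two]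

section G

variable {p : ℕ} (hp : 2 ≤ p)

theorem signedSwap_mem_G {i j : Fin p} (h : i ≠ j) : signedSwap h ∈ G p hp :=
  signedSwap_mem_of_forall
    (fun i h => by
      rw [← Qm_eq_signedSwap]
      exact Subgroup.subset_closure (Or.inl ⟨i, h, Or.inr rfl⟩)) h

theorem transvection_two_mem_G {i j : Fin p} (h : i ≠ j) :
    SpecialLinearGroup.transvection h 2 ∈ G p hp :=
  transvection_mem_of_forall (signedSwap_mem_G hp)
    (fun i h => by
      rw [← Rm_sq]
      exact Subgroup.subset_closure (Or.inl ⟨i, h, Or.inl rfl⟩)) h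

theorem transvection_mul_transvection_mem_G {i j k : Fin p} (hik : i ≠ k) (hjk : j ≠ k)
    (hij : i ≠ j) :
    SpecialLinearGroup.transvection hik 1 * SpecialLinearGroup.transvection hjk 1 ∈ G p hp :=
  transvection_mul_transvection_mem_of_forall_col (signedSwap_mem_G hp)
    (transvection_mul_transvection_mem_of_forall_row (firstIdx_ne_lastIdx p hp)
      (signedSwap_mem_G hp) fun j h1 h2 => Subgroup.subset_closure (Or.inr ⟨j, h1, h2, rfl⟩))
    hik hjk hij

end G

/-- `G` contains `R_{ij}²` and `Q_{ij}` for all distinct `i ≠ j`, and `R_{ik} R_{jk}`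
for all mutually distinct triples `i, j, k`. -/
theorem statement4 (p : ℕ) (hp : 2 ≤ p) :
    (∀ (i j : Fin p) (h : i ≠ j), (Rm p i j h) ^ 2 ∈ G p hp ∧ Qm p i j h ∈ G p hp) ∧
    (∀ (i j k : Fin p) (hik : i ≠ k) (hjk : j ≠ k), i ≠ j →
      Rm p i k hik * Rm p j k hjk ∈ G p hp) := by
  refine ⟨fun i j h => ⟨?_, ?_⟩, fun i j k hik hjk hij => ?_⟩
  · rw [Rm_sq]
    exact transvection_two_mem_G hp h
  · rw [Qm_eq_signedSwap]
    exact signedSwap_mem_G hp h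
  · rw [Rm_eq_transvection, Rm_eq_transvection]
    exact transvection_mul_transvection_mem_G hp hik hjk hij
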